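/- Let M be a smooth manifold, I ⊆ TM a smooth tangent distribution with smooth annihilator I°, and Θ = I ⊕ {0} ⊆ TM ⊕ T*M. Then the smooth orthogonal of Θ with respect to the pairing ⟨(u,α),(v,β)⟩ = β(u) + α(v) is Θ^⊥ = TM ⊕ I°. Dually, for a cotangent distribution C ⊆ T*M one has ({0} ⊕ C)^⊥ = C° ⊕ T*M, where C° is the smooth annihilator of C in TM. -/

import Mathlib

open Bundle Set
open scoped Manifold
noncomputable section

namespace Paper

/-- Sum of two subsets of a module. -/
def setAdd {X : Type*} [Add X] (A B : Set X) : Set X := {x | ∃ a ∈ A, ∃ b ∈ B, x = a + b}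

section Model
variable {F : Type*} [NormedAddCommGroup F] [NormedSpace ℝ F]

/-- Lie derivative of a covector field along a vector field in a vector space (within a set):
`(£_V ω)(x) = Dω(x)(V x) + ω(x) ∘ DV(x)`. -/
def covLieWithin (V : F → F) (ω : F → F →L[ℝ] ℝ) (s : Set F) (x : F) : F →L[ℝ] ℝ :=
  fderivWithin ℝ ω s x (V x) + (ω x).comp (fderivWithin ℝ V s x)

/-- Interior product `i_V dω` in a vector space (within a set):
`(i_V dω)(x) w = dω(x)(V x, w)`. -/
def iExtWithin (V : F → F) (ω : F → F →L[ℝ] ℝ) (s : Set F) (x : F) : F →L[ℝ] ℝ :=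
  fderivWithin ℝ ω s x (V x) - (fderivWithin ℝ ω s x).flip (V x)

/-- Lie derivative of a covector field along a vector field in a vector space. -/
def covLie (V : F → F) (ω : F → F →L[ℝ] ℝ) (x : F) : F →L[ℝ] ℝ :=
  fderiv ℝ ω x (V x) + (ω x).comp (fderiv ℝ V x)

/-- Interior product `i_V dω` in a vector space. -/
def iExt (V : F → F) (ω : F → F →L[ℝ] ℝ) (x : F) : F →L[ℝ] ℝ :=
  fderiv ℝ ω x (V x) - (fderiv ℝ ω x).flip (V x)

/-- The skew-symmetric Courant bracket of two sections `(X,α)`, `(Y,β)` of the Pontryagin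
bundle of a vector space:
`[(X,α),(Y,β)] = ([X,Y], £_X β − i_Y dα − ½ d(β(X)+α(Y)))`. -/
def vsCourantSkew (X : F → F) (α : F → F →L[ℝ] ℝ) (Y : F → F) (β : F → F →L[ℝ] ℝ)
    (x : F) : F × (F →L[ℝ] ℝ) :=
  (VectorField.lieBracket ℝ X Y x,
    covLie X β x - iExt Y α x
      - (2⁻¹ : ℝ) • fderiv ℝ (fun p => β p (X p) + α p (Y p)) x)

/-- The projection of `ℝⁿ` onto the coordinates `x^{k+1}, …, x^n`. -/
def projTail (n k : ℕ) : (Fin n → ℝ) →L[ℝ] (Fin n → ℝ) :=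
  ContinuousLinearMap.pi fun j : Fin n =>
    if (j : ℕ) < k then 0 else ContinuousLinearMap.proj j

end Model

variable {E : Type*} [NormedAddCommGroup E] [NormedSpace ℝ E]
  {H : Type*} [TopologicalSpace H] (I : ModelWithCorners ℝ E H)
  {M : Type*} [TopologicalSpace M] [ChartedSpace H M] [IsManifold I (⊤ : ℕ∞) M]

variable (M) in
/-- Vector fields on `M`. -/
abbrev VF := (m : M) → TangentSpace I m

variable (M) in
/-- Covector fields (one-forms) on `M`. -/
abbrev OF := (m : M) → TangentSpace I m →L[ℝ] ℝ

variable (M) in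
/-- The fiber of the Pontryagin bundle `TM ⊕ T*M` at `m`. -/
abbrev PFiber (m : M) := TangentSpace I m × (TangentSpace I m →L[ℝ] ℝ)

/-- The canonical symmetric pairing on the Pontryagin bundle:
`⟨(u,α),(v,β)⟩ = β(u) + α(v)`. -/
def pair {m : M} (σ τ : PFiber I M m) : ℝ := τ.2 σ.1 + σ.2 τ.1

/-- A vector field is smooth on `U` if it is a smooth section of the tangent bundle there. -/
def IsSmoothVFOn (X : VF I M) (U : Set M) : Prop :=
  ContMDiffOn I I.tangent (⊤ : ℕ∞) (fun m => (⟨m, X m⟩ : TangentBundle I M)) U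

/-- A one-form is smooth on `U` if it is a smooth section there of the bundle of continuous
linear maps from `TM` to the trivial real line bundle. -/
def IsSmoothOFOn (α : OF I M) (U : Set M) : Prop :=
  ContMDiffOn I (I.prod 𝓘(ℝ, E →L[ℝ] ℝ)) (⊤ : ℕ∞)
    (fun m => (⟨m, α m⟩ : TotalSpace (E →L[ℝ] ℝ)
      (fun x : M => TangentSpace I x →L[ℝ] Bundle.Trivial M ℝ x))) U

variable (M) in
/-- A generalized distribution in the Pontryagin bundle: a fiberwise family of subsets. -/
abbrev GDist := (m : M) → Set (PFiber I M m)

/-- `(X, α)` is a smooth local section of `Δ` over `U`. -/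
def IsSecOn (X : VF I M) (α : OF I M) (Δ : GDist I M) (U : Set M) : Prop :=
  IsSmoothVFOn I X U ∧ IsSmoothOFOn I α U ∧ ∀ m ∈ U, ((X m, α m) : PFiber I M m) ∈ Δ m

/-- `Δ` is a smooth generalized distribution: every element of every fiber is the value of a
local smooth section of the Pontryagin bundle taking values in `Δ`. -/
def IsSmoothDist (Δ : GDist I M) : Prop :=
  ∀ m, ∀ v ∈ Δ m, ∃ U X α, IsOpen U ∧ m ∈ U ∧ IsSecOn I X α Δ U ∧
    ((X m, α m) : PFiber I M m) = v

/-- The pointwise orthogonal of a subset of a Pontryagin fiber. -/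
def ptOrth {m : M} (S : Set (PFiber I M m)) : Set (PFiber I M m) :=
  {σ | ∀ τ ∈ S, pair I σ τ = 0}

/-- The smooth orthogonal distribution `Δ^⊥`: values of local smooth sections of the
Pontryagin bundle pairing to zero, on common domains, with all local smooth sections of `Δ`. -/
def smoothOrth (Δ : GDist I M) (m : M) : Set (PFiber I M m) :=
  {v | ∃ U X α, IsOpen U ∧ m ∈ U ∧ IsSmoothVFOn I X U ∧ IsSmoothOFOn I α U ∧
      ((X m, α m) : PFiber I M m) = v ∧
      ∀ V Y β, IsOpen V → IsSecOn I Y β Δ V →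
        ∀ m' ∈ U ∩ V, pair I ((X m', α m') : PFiber I M m') (Y m', β m') = 0}

/-- `Δ` is a vector subbundle of the Pontryagin bundle: the fibers are subspaces and around
every point there is a local frame of smooth sections. -/
def IsSubbundle (Δ : GDist I M) : Prop :=
  (∀ m, ∃ S : Submodule ℝ (PFiber I M m), (S : Set (PFiber I M m)) = Δ m) ∧
  ∀ m, ∃ (U : Set M), IsOpen U ∧ m ∈ U ∧
    ∃ (k : ℕ) (X : Fin k → VF I M) (α : Fin k → OF I M),
      (∀ i, IsSmoothVFOn I (X i) U ∧ IsSmoothOFOn I (α i) U) ∧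
      ∀ m' ∈ U, LinearIndependent ℝ (fun i => ((X i m', α i m') : PFiber I M m')) ∧
        Δ m' = ↑(Submodule.span ℝ (Set.range fun i => ((X i m', α i m') : PFiber I M m')))

/-- `Δ` is locally finitely generated. -/
def IsLocFinGen (Δ : GDist I M) : Prop :=
  ∀ m, ∃ (U : Set M), IsOpen U ∧ m ∈ U ∧
    ∃ (k : ℕ) (X : Fin k → VF I M) (α : Fin k → OF I M),
      (∀ i, IsSmoothVFOn I (X i) U ∧ IsSmoothOFOn I (α i) U) ∧
      ∀ m' ∈ U, Δ m' = ↑(Submodule.span ℝ (Set.range fun i => ((X i m', α i m') : PFiber I M m')))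

/-- A subset of a Pontryagin fiber has rank (dimension) `r`. -/
def HasRank {m : M} (S : Set (PFiber I M m)) (r : ℕ) : Prop :=
  ∃ f : Fin r → PFiber I M m, (∀ i, f i ∈ S) ∧ LinearIndependent ℝ f ∧
    ∀ σ ∈ S, σ ∈ Submodule.span ℝ (Set.range f)

/-- The rank of `Δ` is locally constant. -/
def LocConstRank (Δ : GDist I M) : Prop :=
  ∀ m, ∃ U, IsOpen U ∧ m ∈ U ∧ ∃ r : ℕ, ∀ m' ∈ U, HasRank I (Δ m') r

variable (M) in
/-- Tangent distributions. -/
abbrev TDist := (m : M) → Set (TangentSpace I m)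

/-- `Z` is a smooth local section of the tangent distribution `T` over `U`. -/
def IsTSecOn (Z : VF I M) (T : TDist I M) (U : Set M) : Prop :=
  IsSmoothVFOn I Z U ∧ ∀ m ∈ U, Z m ∈ T m

/-- smooth tangent distribution -/
def IsSmoothTDist (T : TDist I M) : Prop :=
  ∀ m, ∀ v ∈ T m, ∃ U Z, IsOpen U ∧ m ∈ U ∧ IsTSecOn I Z T U ∧ Z m = v

/-- `T ⊆ TM` is a vector subbundle of the tangent bundle. -/
def IsTSubbundle (T : TDist I M) : Prop :=
  (∀ m, ∃ S : Submodule ℝ (TangentSpace I m), (S : Set (TangentSpace I m)) = T m) ∧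
  ∀ m, ∃ (U : Set M), IsOpen U ∧ m ∈ U ∧ ∃ (k : ℕ) (Z : Fin k → VF I M),
    (∀ i, IsSmoothVFOn I (Z i) U) ∧
    ∀ m' ∈ U, LinearIndependent ℝ (fun i => Z i m') ∧
      T m' = ↑(Submodule.span ℝ (Set.range fun i => Z i m'))

/-- A locally finitely generated tangent distribution. -/
def IsTLocFinGen (T : TDist I M) : Prop :=
  ∀ m, ∃ (U : Set M), IsOpen U ∧ m ∈ U ∧ ∃ (k : ℕ) (Z : Fin k → VF I M),
    (∀ i, IsSmoothVFOn I (Z i) U) ∧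
    ∀ m' ∈ U, T m' = ↑(Submodule.span ℝ (Set.range fun i => Z i m'))

/-- The smooth annihilator `T°` of a tangent distribution: values of local smooth one-forms
vanishing, on common domains, on all local smooth sections of `T`. -/
def annOf (T : TDist I M) (m : M) : Set (TangentSpace I m →L[ℝ] ℝ) :=
  {ω | ∃ U α, IsOpen U ∧ m ∈ U ∧ IsSmoothOFOn I α U ∧
      (∀ V Z, IsOpen V → IsTSecOn I Z T V → ∀ m' ∈ U ∩ V, α m' (Z m') = 0) ∧
      α m = ω}

variable (M) in
/-- Cotangent distributions. -/
abbrev CDist := (m : M) → Set (TangentSpace I m →L[ℝ] ℝ)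

/-- `β` is a smooth local section of the cotangent distribution `C` over `U`. -/
def IsCSecOn (β : OF I M) (C : CDist I M) (U : Set M) : Prop :=
  IsSmoothOFOn I β U ∧ ∀ m ∈ U, β m ∈ C m

/-- smooth cotangent distribution -/
def IsSmoothCDist (C : CDist I M) : Prop :=
  ∀ m, ∀ ω ∈ C m, ∃ U β, IsOpen U ∧ m ∈ U ∧ IsCSecOn I β C U ∧ β m = ω

/-- The smooth annihilator `C°` of a cotangent distribution. -/
def coannOf (C : CDist I M) (m : M) : Set (TangentSpace I m) :=
  {v | ∃ U Z, IsOpen U ∧ m ∈ U ∧ IsSmoothVFOn I Z U ∧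
      (∀ V β, IsOpen V → IsCSecOn I β C V → ∀ m' ∈ U ∩ V, β m' (Z m') = 0) ∧
      Z m = v}

/-- The pullback of a vector field to the model space via the preferred chart at `m`. -/
def chartVF (m : M) (X : VF I M) : E → E := fun x =>
  (mfderivWithin 𝓘(ℝ, E) I (extChartAt I m).symm (Set.range I) x).inverse
    (X ((extChartAt I m).symm x))

/-- The pullback of a one-form to the model space via the preferred chart at `m`. -/
def chartOF (m : M) (α : OF I M) : E → (E →L[ℝ] ℝ) := fun x =>
  (α ((extChartAt I m).symm x)).comp
    (mfderivWithin 𝓘(ℝ, E) I (extChartAt I m).symm (Set.range I) x)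

/-- The Lie bracket of vector fields on a manifold, computed in the preferred chart. -/
def mlieB (X Y : VF I M) (m : M) : TangentSpace I m :=
  mfderivWithin 𝓘(ℝ, E) I (extChartAt I m).symm (Set.range I) (extChartAt I m m)
    ((VectorField.lieBracketWithin ℝ (chartVF I m X) (chartVF I m Y)
      (Set.range I) (extChartAt I m m) : E))

/-- The Lie derivative `£_X α` of a one-form along a vector field on a manifold. -/
def mlieDerivOF (X : VF I M) (α : OF I M) (m : M) : TangentSpace I m →L[ℝ] ℝ :=
  (covLieWithin (chartVF I m X) (chartOF I m α) (Set.range I) (extChartAt I m m)).comp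
    (mfderiv I 𝓘(ℝ, E) (extChartAt I m) m)

/-- The interior product `i_Y dα` on a manifold. -/
def miExtDeriv (Y : VF I M) (α : OF I M) (m : M) : TangentSpace I m →L[ℝ] ℝ :=
  (iExtWithin (chartVF I m Y) (chartOF I m α) (Set.range I) (extChartAt I m m)).comp
    (mfderiv I 𝓘(ℝ, E) (extChartAt I m) m)

/-- The differential of a real function on a manifold, as a one-form. -/
def mdiff (f : M → ℝ) (m : M) : TangentSpace I m →L[ℝ] ℝ :=
  mfderiv I 𝓘(ℝ, ℝ) f m

/-- The skew-symmetric Courant bracket on sections of the Pontryagin bundle: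
`[(X,α),(Y,β)] = ([X,Y], £_X β − i_Y dα − ½ d(β(X)+α(Y)))`. -/
def courantSkew (X : VF I M) (α : OF I M) (Y : VF I M) (β : OF I M) (m : M) :
    PFiber I M m :=
  (mlieB I X Y m,
    mlieDerivOF I X β m - miExtDeriv I Y α m
      - (2⁻¹ : ℝ) • mdiff I (fun p => β p (X p) + α p (Y p)) m)

/-- The (non-skew-symmetric) Courant bracket `[(X,α),(Y,β)] = ([X,Y], £_X β − i_Y dα)`. -/
def courant (X : VF I M) (α : OF I M) (Y : VF I M) (β : OF I M) (m : M) :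
    PFiber I M m :=
  (mlieB I X Y m, mlieDerivOF I X β m - miExtDeriv I Y α m)

/-- A Dirac structure: a Lagrangian vector subbundle of the Pontryagin bundle. -/
def IsDirac (D : (m : M) → Submodule ℝ (PFiber I M m)) : Prop :=
  IsSubbundle I (fun m => (D m : Set (PFiber I M m))) ∧
  ∀ m, (D m : Set (PFiber I M m)) = ptOrth I (D m : Set (PFiber I M m))

/-- A Dirac structure is closed (integrable) if the Courant bracket of any two local smooth
sections of `D` is again a section of `D`. -/
def IsClosedDirac (D : (m : M) → Submodule ℝ (PFiber I M m)) : Prop :=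
  ∀ U₁ U₂ X α Y β, IsOpen U₁ → IsOpen U₂ →
    IsSecOn I X α (fun m => (D m : Set (PFiber I M m))) U₁ →
    IsSecOn I Y β (fun m => (D m : Set (PFiber I M m))) U₂ →
    ∀ m ∈ U₁ ∩ U₂, courant I X α Y β m ∈ D m

section Action
variable {E' : Type*} [NormedAddCommGroup E'] [NormedSpace ℝ E']
  {H' : Type*} [TopologicalSpace H'] (I' : ModelWithCorners ℝ E' H')
  {G : Type*} [TopologicalSpace G] [ChartedSpace H' G] [Group G] [LieGroup I' (⊤ : ℕ∞) G]

/-- A smooth left action of a Lie group `G` on `M`. -/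
def IsSmoothAction (Φ : G → M → M) : Prop :=
  ContMDiff (I'.prod I) I (⊤ : ℕ∞) (fun p : G × M => Φ p.1 p.2) ∧
  (∀ m, Φ 1 m = m) ∧ ∀ g h m, Φ g (Φ h m) = Φ (g * h) m

/-- The action is proper. -/
def IsProperAction (Φ : G → M → M) : Prop :=
  IsProperMap (fun p : G × M => (Φ p.1 p.2, p.2))

/-- All isotropy subgroups of the action are conjugated. -/
def ConjIsotropy (Φ : G → M → M) : Prop :=
  ∀ m m' : M, ∃ g : G, ∀ h : G, Φ h m' = m' ↔ Φ (g⁻¹ * h * g) m = m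

/-- The infinitesimal generator of the action associated to `ξ ∈ 𝔤 = T₁G`:
`ξ_M(m) = T₁(g ↦ Φ g m)(ξ)`. -/
def gen (Φ : G → M → M) (ξ : TangentSpace I' (1 : G)) : VF I M :=
  fun m => mfderiv I' I (fun g => Φ g m) (1 : G) ξ

/-- The vertical distribution of the action: values of the infinitesimal generators. -/
def vert (Φ : G → M → M) : TDist I M :=
  fun m => {v | ∃ ξ : TangentSpace I' (1 : G), gen I I' Φ ξ m = v}

/-- `X` is a `G`-invariant vector field on `U` (`Φ_g^* X = X`). -/
def IsInvVFOn (Φ : G → M → M) (X : VF I M) (U : Set M) : Prop :=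
  ∀ g : G, ∀ m ∈ U, Φ g m ∈ U → mfderiv I I (Φ g) m (X m) = X (Φ g m)

/-- `α` is a `G`-invariant one-form on `U` (`Φ_g^* α = α`). -/
def IsInvOFOn (Φ : G → M → M) (α : OF I M) (U : Set M) : Prop :=
  ∀ g : G, ∀ m ∈ U, Φ g m ∈ U → (α (Φ g m)).comp (mfderiv I I (Φ g) m) = α m

/-- The smooth annihilator `V°` of the vertical distribution: values of local smooth
one-forms annihilating all infinitesimal generators. -/
def vertAnn (Φ : G → M → M) (m : M) : Set (TangentSpace I m →L[ℝ] ℝ) :=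
  {ω | ∃ U α, IsOpen U ∧ m ∈ U ∧ IsSmoothOFOn I α U ∧
      (∀ m' ∈ U, ∀ ξ : TangentSpace I' (1 : G), α m' (gen I I' Φ ξ m') = 0) ∧
      α m = ω}

/-- The fiber of `D ∩ K^⊥` where `K = V ⊕ {0}` and `K^⊥ = TM ⊕ V°`. -/
def DcapKperp (Φ : G → M → M) (D : (m : M) → Submodule ℝ (PFiber I M m)) (m : M) :
    Set (PFiber I M m) :=
  {σ | σ ∈ D m ∧ σ.2 ∈ vertAnn I I' Φ m}

/-- The action of `G` on the Dirac manifold `(M, D)` is canonical: the pullback by every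
`Φ_g` of an element of `D` lies in `D`. -/
def IsCanonical (Φ : G → M → M) (D : (m : M) → Submodule ℝ (PFiber I M m)) : Prop :=
  ∀ (g : G) (m : M), ∀ σ ∈ D (Φ g m),
    ((mfderiv I I (Φ g⁻¹) (Φ g m) σ.1,
      σ.2.comp (mfderiv I I (Φ g) m)) : PFiber I M m) ∈ D m

/-- `(X, α)` is a descending section of `TM ⊕ V°` on `U`: it is smooth, `[X, Γ(V)] ⊆ Γ(V)`,
and `α` is a `G`-invariant one-form annihilating the vertical distribution. -/
def IsDescendingOn (Φ : G → M → M) (X : VF I M) (α : OF I M) (U : Set M) : Prop :=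
  IsSmoothVFOn I X U ∧ IsSmoothOFOn I α U ∧
  (∀ V W, IsOpen V → IsTSecOn I W (vert I I' Φ) V →
    ∀ m ∈ U ∩ V, mlieB I X W m ∈ vert I I' Φ m) ∧
  IsInvOFOn I Φ α U ∧
  (∀ m ∈ U, ∀ ξ : TangentSpace I' (1 : G), α m (gen I I' Φ ξ m) = 0)

end Action

/-! The inclusion `Θ^⊥ ⊆ TM ⊕ I°` comes from pairing a section `(X, α)` of `Θ^⊥` with the sections
`(Z, 0)` of `Θ`: this forces `α (Z) = 0`, so `α` itself witnesses that `α m ∈ I°`. Conversely, given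
`α` witnessing `ω ∈ I°` and any `v ∈ TₘM`, extend `v` to a local smooth vector field `X`; then
`(X, α)` pairs with every local section `(Y, 0)` of `Θ` to `α (Y) = 0`. The cotangent case is the
same argument with the roles of vectors and covectors exchanged. -/

theorem exists_isSmoothVFOn_apply_eq (m : M) (v : TangentSpace I m) :
    ∃ U X, IsOpen U ∧ m ∈ U ∧ IsSmoothVFOn I X U ∧ X m = v := by
  obtain ⟨s, hs, hsmooth⟩ := FiberBundle.exists_contMDiffOn_extend (k := (⊤ : ℕ∞)) I E v
  obtain ⟨U, hUs, hU, hmU⟩ := mem_nhds_iff.mp hs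
  exact ⟨U, _, hU, hmU, hsmooth.mono hUs, FiberBundle.extend_apply_self E v⟩

theorem exists_isSmoothOFOn_apply_eq (m : M) (ω : TangentSpace I m →L[ℝ] ℝ) :
    ∃ U α, IsOpen U ∧ m ∈ U ∧ IsSmoothOFOn I α U ∧ α m = ω := by
  obtain ⟨s, hs, hsmooth⟩ := FiberBundle.exists_contMDiffOn_extend (k := (⊤ : ℕ∞)) I
    (E →L[ℝ] ℝ) (V := fun x : M => TangentSpace I x →L[ℝ] Bundle.Trivial M ℝ x) ω
  obtain ⟨U, hUs, hU, hmU⟩ := mem_nhds_iff.mp hs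
  exact ⟨U, _, hU, hmU, hsmooth.mono hUs, FiberBundle.extend_apply_self (E →L[ℝ] ℝ)
    (E := fun x : M => TangentSpace I x →L[ℝ] Bundle.Trivial M ℝ x) ω⟩

theorem smoothOrth_tangent_sum_zero (T : TDist I M) (m : M) :
    smoothOrth I (fun m' => {σ : PFiber I M m' | σ.1 ∈ T m' ∧ σ.2 = 0}) m =
      {σ : PFiber I M m | σ.2 ∈ annOf I T m} := by
  ext σ
  constructor
  · rintro ⟨U, X, α, hU, hmU, -, hα, rfl, horth⟩
    refine ⟨U, α, hU, hmU, hα, fun V Z hV ⟨hZ, hZT⟩ m' hm' => ?_, rfl⟩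
    have hsec : IsSecOn I Z 0 (fun m' => {σ : PFiber I M m' | σ.1 ∈ T m' ∧ σ.2 = 0}) V :=
      ⟨hZ, (Bundle.contMDiff_zeroSection ℝ _).contMDiffOn, fun m'' hm'' => ⟨hZT m'' hm'', rfl⟩⟩
    simpa [pair] using horth V Z 0 hV hsec m' hm'
  · rintro ⟨U, α, hU, hmU, hα, hann, hαm⟩
    obtain ⟨U', X, hU', hmU', hX, hXm⟩ := exists_isSmoothVFOn_apply_eq I m σ.1
    refine ⟨U ∩ U', X, α, hU.inter hU', ⟨hmU, hmU'⟩, hX.mono inter_subset_right,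
      hα.mono inter_subset_left, by rw [hXm, hαm], ?_⟩
    rintro V Y β hV ⟨hY, -, hYβ⟩ m' ⟨⟨hm'U, -⟩, hm'V⟩
    have hβ0 : β m' = 0 := (hYβ m' hm'V).2
    have hαY : α m' (Y m') = 0 :=
      hann V Y hV ⟨hY, fun m'' hm'' => (hYβ m'' hm'').1⟩ m' ⟨hm'U, hm'V⟩
    simp [pair, hβ0, hαY]

theorem smoothOrth_zero_sum_cotangent (C : CDist I M) (m : M) :
    smoothOrth I (fun m' => {σ : PFiber I M m' | σ.1 = 0 ∧ σ.2 ∈ C m'}) m =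
      {σ : PFiber I M m | σ.1 ∈ coannOf I C m} := by
  ext σ
  constructor
  · rintro ⟨U, X, α, hU, hmU, hX, -, rfl, horth⟩
    refine ⟨U, X, hU, hmU, hX, fun V β hV ⟨hβ, hβC⟩ m' hm' => ?_, rfl⟩
    have hsec : IsSecOn I 0 β (fun m' => {σ : PFiber I M m' | σ.1 = 0 ∧ σ.2 ∈ C m'}) V :=
      ⟨(Bundle.contMDiff_zeroSection ℝ _).contMDiffOn, hβ, fun m'' hm'' => ⟨rfl, hβC m'' hm''⟩⟩
    simpa [pair] using horth V 0 β hV hsec m' hm'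
  · rintro ⟨U, Z, hU, hmU, hZ, hcoann, hZm⟩
    obtain ⟨U', α, hU', hmU', hα, hαm⟩ := exists_isSmoothOFOn_apply_eq I m σ.2
    refine ⟨U ∩ U', Z, α, hU.inter hU', ⟨hmU, hmU'⟩, hZ.mono inter_subset_left,
      hα.mono inter_subset_right, by rw [hZm, hαm], ?_⟩
    rintro V Y β hV ⟨-, hβ, hYβ⟩ m' ⟨⟨hm'U, -⟩, hm'V⟩
    have hY0 : Y m' = 0 := (hYβ m' hm'V).1
    have hβZ : β m' (Z m') = 0 :=
      hcoann V β hV ⟨hβ, fun m'' hm'' => (hYβ m'' hm'').2⟩ m' ⟨hm'U, hm'V⟩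
    simp [pair, hY0, hβZ]

theorem statement18
    (T : TDist I M)
    (C : CDist I M) :
    (∀ m : M, smoothOrth I (fun m' => {σ : PFiber I M m' | σ.1 ∈ T m' ∧ σ.2 = 0}) m =
      {σ : PFiber I M m | σ.2 ∈ annOf I T m}) ∧
    (∀ m : M, smoothOrth I (fun m' => {σ : PFiber I M m' | σ.1 = 0 ∧ σ.2 ∈ C m'}) m =
      {σ : PFiber I M m | σ.1 ∈ coannOf I C m}) :=
  ⟨smoothOrth_tangent_sum_zero I T, smoothOrth_zero_sum_cotangent I C⟩

end Paper
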